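/- arXiv:1109.0745 — 4 statements merged into one kernel-verified Lean document; each statement's English description precedes it below -/
import Mathlib

section
/- The positive solutions without zeros of the ODE f''·f - (f')² = -ξ² (ξ > 0) on an interval are exactly the functions f(r) = (ξ/α)·sin(αr+β), f(r) = ±(ξ/α)·sinh(αr+β), and f(r) = ±ξ·r + β, for real constants α ≠ 0 and β, restricted to intervals where f ≠ 0. -/
/-!
Differentiating shows that `(f'² - ξ²) / f²` is constant, say `c`, so that `f'² = c f² + ξ²` and
then `f'' = c f`. The linear equation `f'' = c f` is solved through its conserved quantities
(`α f cos αr - f' sin αr` and `α f sin αr + f' cos αr` when `c = -α²`, `(f' ± α f) e^{∓αr}` when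
`c = α²`, and `f'` when `c = 0`), and evaluating `f'² - c f²` at one point fixes the amplitude `ξ`.
-/

open Set Real

theorem IsOpen.exists_eq_of_hasDerivAt_zero {s : Set ℝ} {g : ℝ → ℝ} (hs : IsOpen s)
    (hs' : IsPreconnected s) (hg : ∀ r ∈ s, HasDerivAt g 0 r) : ∃ C, ∀ r ∈ s, g r = C :=
  hs.exists_is_const_of_deriv_eq_zero hs'
    (fun r hr => (hg r hr).differentiableAt.differentiableWithinAt) fun r hr => (hg r hr).deriv

theorem ContDiffOn.hasDerivAt_deriv_and_deriv_deriv {s : Set ℝ} {f : ℝ → ℝ} (hs : IsOpen s)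
    (hf : ContDiffOn ℝ 2 f s) :
    (∀ r ∈ s, HasDerivAt f (deriv f r) r) ∧
      ∀ r ∈ s, HasDerivAt (deriv f) (deriv (deriv f) r) r := by
  have hf' : ContDiffOn ℝ 1 (deriv f) s := hf.deriv_of_isOpen hs (by norm_num)
  exact ⟨fun r hr => ((hf.contDiffAt (hs.mem_nhds hr)).differentiableAt (by norm_num)).hasDerivAt,
    fun r hr => ((hf'.contDiffAt (hs.mem_nhds hr)).differentiableAt (by norm_num)).hasDerivAt⟩

theorem Real.exists_eq_mul_sin_and_eq_mul_cos {P Q ξ : ℝ} (hξ : 0 ≤ ξ)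
    (h : P ^ 2 + Q ^ 2 = ξ ^ 2) : ∃ β, P = ξ * sin β ∧ Q = ξ * cos β := by
  set z : ℂ := Q + P * Complex.I
  have hz : ‖z‖ = ξ := by
    rw [Complex.norm_def, Complex.normSq_apply]
    simp only [z, Complex.add_re, Complex.add_im, Complex.ofReal_re, Complex.ofReal_im,
      Complex.mul_re, Complex.mul_im, Complex.I_re, Complex.I_im]
    rw [← sqrt_sq hξ, ← h]
    ring_nf
  refine ⟨z.arg, ?_, ?_⟩
  · simpa [z, hz] using (Complex.norm_mul_sin_arg z).symm
  · simpa [z, hz] using (Complex.norm_mul_cos_arg z).symm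

theorem Real.exists_eq_mul_exp_of_mul_eq_sq {A B ξ : ℝ} (hξ : 0 < ξ) (h : A * B = ξ ^ 2) :
    ∃ β, (A = ξ * exp β ∧ B = ξ * exp (-β)) ∨ (A = -(ξ * exp β) ∧ B = -(ξ * exp (-β))) := by
  have hA : A ≠ 0 := by rintro rfl; nlinarith
  have hB : B = ξ ^ 2 / A := by field_simp; linear_combination h
  refine ⟨log (|A| / ξ), ?_⟩
  rw [exp_neg, exp_log (by positivity), hB]
  rcases abs_cases A with ⟨hA', -⟩ | ⟨hA', -⟩
  · left; rw [hA']; constructor <;> field_simp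
  · right; rw [hA']; constructor <;> field_simp

section SecondOrder

variable {s : Set ℝ} {f f' f'' : ℝ → ℝ} {α ξ r₀ : ℝ}

theorem exists_sq_eq_and_eq_mul_of_mul_sub_sq_eq (hs : IsOpen s) (hs' : IsPreconnected s) {K : ℝ}
    (hf : ∀ r ∈ s, HasDerivAt f (f' r) r) (hf' : ∀ r ∈ s, HasDerivAt f' (f'' r) r)
    (hne : ∀ r ∈ s, f r ≠ 0) (hode : ∀ r ∈ s, f'' r * f r - f' r ^ 2 = -K) :
    ∃ c, ∀ r ∈ s, f' r ^ 2 = c * f r ^ 2 + K ∧ f'' r = c * f r := by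
  obtain ⟨c, hc⟩ : ∃ c, ∀ r ∈ s, (f' r ^ 2 - K) / f r ^ 2 = c := by
    refine hs.exists_eq_of_hasDerivAt_zero hs' fun r hr => ?_
    refine ((((hf' r hr).pow 2).sub_const K).div ((hf r hr).pow 2)
      (pow_ne_zero 2 (hne r hr))).congr_deriv ?_
    rw [div_eq_zero_iff]
    left
    simp only [Pi.pow_apply]
    linear_combination (2 * f' r * f r) * hode r hr
  refine ⟨c, fun r hr => ?_⟩
  have hfr := hne r hr
  have hsq : f' r ^ 2 = c * f r ^ 2 + K := by
    rw [← hc r hr]; field_simp; ring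
  refine ⟨hsq, mul_right_cancel₀ hfr ?_⟩
  linear_combination hode r hr + hsq

theorem exists_mul_eq_cos_add_sin (hs : IsOpen s) (hs' : IsPreconnected s)
    (hf : ∀ r ∈ s, HasDerivAt f (f' r) r) (hf' : ∀ r ∈ s, HasDerivAt f' (f'' r) r)
    (hode : ∀ r ∈ s, f'' r = -α ^ 2 * f r) :
    ∃ P Q, ∀ r ∈ s, α * f r = P * cos (α * r) + Q * sin (α * r) ∧
      f' r = Q * cos (α * r) - P * sin (α * r) := by
  obtain ⟨P, hP⟩ : ∃ P, ∀ r ∈ s, α * f r * cos (α * r) - f' r * sin (α * r) = P := by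
    refine hs.exists_eq_of_hasDerivAt_zero hs' fun r hr => ?_
    refine ((((hf r hr).const_mul α).mul (hasDerivAt_const_mul α).cos).sub
      ((hf' r hr).mul (hasDerivAt_const_mul α).sin)).congr_deriv ?_
    rw [hode r hr]; ring
  obtain ⟨Q, hQ⟩ : ∃ Q, ∀ r ∈ s, α * f r * sin (α * r) + f' r * cos (α * r) = Q := by
    refine hs.exists_eq_of_hasDerivAt_zero hs' fun r hr => ?_
    refine ((((hf r hr).const_mul α).mul (hasDerivAt_const_mul α).sin).add
      ((hf' r hr).mul (hasDerivAt_const_mul α).cos)).congr_deriv ?_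
    rw [hode r hr]; ring
  refine ⟨P, Q, fun r hr => ⟨?_, ?_⟩⟩ <;> rw [← hP r hr, ← hQ r hr]
  · linear_combination (-(α * f r)) * sin_sq_add_cos_sq (α * r)
  · linear_combination (-f' r) * sin_sq_add_cos_sq (α * r)

theorem exists_add_mul_eq_mul_exp (hs : IsOpen s) (hs' : IsPreconnected s)
    (hf : ∀ r ∈ s, HasDerivAt f (f' r) r) (hf' : ∀ r ∈ s, HasDerivAt f' (f'' r) r)
    (hode : ∀ r ∈ s, f'' r = α ^ 2 * f r) :
    ∃ A B, ∀ r ∈ s, f' r + α * f r = A * exp (α * r) ∧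
      f' r - α * f r = B * exp (-(α * r)) := by
  obtain ⟨A, hA⟩ : ∃ A, ∀ r ∈ s, (f' r + α * f r) * exp (-(α * r)) = A := by
    refine hs.exists_eq_of_hasDerivAt_zero hs' fun r hr => ?_
    refine (((hf' r hr).add ((hf r hr).const_mul α)).mul
      (hasDerivAt_const_mul α).neg.exp).congr_deriv ?_
    simp only [Pi.add_apply, Pi.neg_apply, hode r hr]; ring
  obtain ⟨B, hB⟩ : ∃ B, ∀ r ∈ s, (f' r - α * f r) * exp (α * r) = B := by
    refine hs.exists_eq_of_hasDerivAt_zero hs' fun r hr => ?_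
    refine (((hf' r hr).sub ((hf r hr).const_mul α)).mul
      (hasDerivAt_const_mul α).exp).congr_deriv ?_
    simp only [Pi.sub_apply, hode r hr]; ring
  refine ⟨A, B, fun r hr => ⟨?_, ?_⟩⟩
  · rw [← hA r hr, mul_assoc, ← exp_add, neg_add_cancel, exp_zero, mul_one]
  · rw [← hB r hr, mul_assoc, ← exp_add, add_neg_cancel, exp_zero, mul_one]

theorem exists_eq_mul_add (hs : IsOpen s) (hs' : IsPreconnected s)
    (hf : ∀ r ∈ s, HasDerivAt f (f' r) r) (hf' : ∀ r ∈ s, HasDerivAt f' (f'' r) r)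
    (hode : ∀ r ∈ s, f'' r = 0) :
    ∃ m β, ∀ r ∈ s, f' r = m ∧ f r = m * r + β := by
  obtain ⟨m, hm⟩ := hs.exists_eq_of_hasDerivAt_zero hs' fun r hr => hode r hr ▸ hf' r hr
  obtain ⟨β, hβ⟩ : ∃ β, ∀ r ∈ s, f r - m * r = β := by
    refine hs.exists_eq_of_hasDerivAt_zero hs' fun r hr => ?_
    exact ((hf r hr).sub (hasDerivAt_const_mul m)).congr_deriv (by simp [hm r hr])
  exact ⟨m, β, fun r hr => ⟨hm r hr, by linear_combination hβ r hr⟩⟩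

theorem exists_eq_div_mul_sin (hs : IsOpen s) (hs' : IsPreconnected s) (hα : α ≠ 0)
    (hξ : 0 ≤ ξ) (hf : ∀ r ∈ s, HasDerivAt f (f' r) r) (hf' : ∀ r ∈ s, HasDerivAt f' (f'' r) r)
    (hode : ∀ r ∈ s, f'' r = -α ^ 2 * f r) (hr₀ : r₀ ∈ s)
    (h₀ : f' r₀ ^ 2 = -α ^ 2 * f r₀ ^ 2 + ξ ^ 2) :
    ∃ β, ∀ r ∈ s, f r = ξ / α * sin (α * r + β) := by
  obtain ⟨P, Q, hPQ⟩ := exists_mul_eq_cos_add_sin hs hs' hf hf' hode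
  obtain ⟨hf₀, hf'₀⟩ := hPQ r₀ hr₀
  obtain ⟨β, rfl, rfl⟩ : ∃ β, P = ξ * sin β ∧ Q = ξ * cos β := by
    refine exists_eq_mul_sin_and_eq_mul_cos hξ ?_
    linear_combination (-(P ^ 2 + Q ^ 2)) * sin_sq_add_cos_sq (α * r₀) + h₀
      - (α * f r₀ + P * cos (α * r₀) + Q * sin (α * r₀)) * hf₀
      - (f' r₀ + Q * cos (α * r₀) - P * sin (α * r₀)) * hf'₀
  refine ⟨β, fun r hr => ?_⟩
  rw [sin_add]
  field_simp
  linear_combination (hPQ r hr).1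

theorem exists_eq_div_mul_sinh (hs : IsOpen s) (hs' : IsPreconnected s) (hα : α ≠ 0)
    (hξ : 0 < ξ) (hf : ∀ r ∈ s, HasDerivAt f (f' r) r) (hf' : ∀ r ∈ s, HasDerivAt f' (f'' r) r)
    (hode : ∀ r ∈ s, f'' r = α ^ 2 * f r) (hr₀ : r₀ ∈ s)
    (h₀ : f' r₀ ^ 2 = α ^ 2 * f r₀ ^ 2 + ξ ^ 2) :
    ∃ β, (∀ r ∈ s, f r = ξ / α * sinh (α * r + β)) ∨
      ∀ r ∈ s, f r = -(ξ / α) * sinh (α * r + β) := by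
  obtain ⟨A, B, hAB⟩ := exists_add_mul_eq_mul_exp hs hs' hf hf' hode
  obtain ⟨hA₀, hB₀⟩ := hAB r₀ hr₀
  have hprod : A * B = ξ ^ 2 := by
    have := congr($hA₀ * $hB₀)
    rw [mul_mul_mul_comm, ← exp_add, add_neg_cancel, exp_zero, mul_one] at this
    linear_combination -this + h₀
  obtain ⟨β, ⟨rfl, rfl⟩ | ⟨rfl, rfl⟩⟩ := exists_eq_mul_exp_of_mul_eq_sq hξ hprod
  · refine ⟨β, .inl fun r hr => ?_⟩
    rw [sinh_eq, exp_add, neg_add, exp_add]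
    field_simp
    linear_combination (hAB r hr).1 - (hAB r hr).2
  · refine ⟨β, .inr fun r hr => ?_⟩
    rw [sinh_eq, exp_add, neg_add, exp_add]
    field_simp
    linear_combination (hAB r hr).1 - (hAB r hr).2

theorem exists_eq_mul_add_of_sq_eq (hs : IsOpen s) (hs' : IsPreconnected s)
    (hf : ∀ r ∈ s, HasDerivAt f (f' r) r) (hf' : ∀ r ∈ s, HasDerivAt f' (f'' r) r)
    (hode : ∀ r ∈ s, f'' r = 0) (hr₀ : r₀ ∈ s) (h₀ : f' r₀ ^ 2 = ξ ^ 2) :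
    ∃ β, (∀ r ∈ s, f r = ξ * r + β) ∨ ∀ r ∈ s, f r = -ξ * r + β := by
  obtain ⟨m, β, h⟩ := exists_eq_mul_add hs hs' hf hf' hode
  rcases sq_eq_sq_iff_eq_or_eq_neg.1 ((h r₀ hr₀).1 ▸ h₀) with rfl | rfl
  exacts [⟨β, .inl fun r hr => (h r hr).2⟩, ⟨β, .inr fun r hr => (h r hr).2⟩]

end SecondOrder

section Verification

variable {s : Set ℝ} {f : ℝ → ℝ}

theorem deriv_deriv_mul_sub_sq_of_forall_eq (hs : IsOpen s) {F F' F'' : ℝ → ℝ} {K : ℝ}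
    (hfF : ∀ r ∈ s, f r = F r) (hF : ∀ x, HasDerivAt F (F' x) x)
    (hF' : ∀ x, HasDerivAt F' (F'' x) x) (hK : ∀ x, F'' x * F x - F' x ^ 2 = K) :
    ∀ r ∈ s, deriv (deriv f) r * f r - deriv f r ^ 2 = K := by
  have hderiv : ∀ r ∈ s, deriv f r = F' r := fun r hr => by
    rw [Filter.EventuallyEq.deriv_eq (Filter.eventuallyEq_of_mem (hs.mem_nhds hr) hfF),
      (hF r).deriv]
  intro r hr
  rw [Filter.EventuallyEq.deriv_eq (Filter.eventuallyEq_of_mem (hs.mem_nhds hr) hderiv),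
    (hF' r).deriv, hderiv r hr, hfF r hr, hK]

theorem deriv_deriv_mul_sub_sq_of_eq_mul_sin (hs : IsOpen s) {κ α β : ℝ}
    (h : ∀ r ∈ s, f r = κ * sin (α * r + β)) :
    ∀ r ∈ s, deriv (deriv f) r * f r - deriv f r ^ 2 = -(κ * α) ^ 2 := by
  refine deriv_deriv_mul_sub_sq_of_forall_eq hs h (F' := fun x => κ * α * cos (α * x + β))
    (F'' := fun x => -(κ * α ^ 2) * sin (α * x + β)) (fun x => ?_) (fun x => ?_) fun x => ?_
  · exact (((hasDerivAt_const_mul α).add_const β).sin.const_mul κ).congr_deriv (by ring)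
  · exact (((hasDerivAt_const_mul α).add_const β).cos.const_mul (κ * α)).congr_deriv (by ring)
  · linear_combination (-(κ * α) ^ 2) * sin_sq_add_cos_sq (α * x + β)

theorem deriv_deriv_mul_sub_sq_of_eq_mul_sinh (hs : IsOpen s) {κ α β : ℝ}
    (h : ∀ r ∈ s, f r = κ * sinh (α * r + β)) :
    ∀ r ∈ s, deriv (deriv f) r * f r - deriv f r ^ 2 = -(κ * α) ^ 2 := by
  refine deriv_deriv_mul_sub_sq_of_forall_eq hs h (F' := fun x => κ * α * cosh (α * x + β))
    (F'' := fun x => κ * α ^ 2 * sinh (α * x + β)) (fun x => ?_) (fun x => ?_) fun x => ?_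
  · exact (((hasDerivAt_const_mul α).add_const β).sinh.const_mul κ).congr_deriv (by ring)
  · exact (((hasDerivAt_const_mul α).add_const β).cosh.const_mul (κ * α)).congr_deriv (by ring)
  · linear_combination (-(κ * α) ^ 2) * cosh_sq_sub_sinh_sq (α * x + β)

theorem deriv_deriv_mul_sub_sq_of_eq_mul_add (hs : IsOpen s) {m β : ℝ}
    (h : ∀ r ∈ s, f r = m * r + β) :
    ∀ r ∈ s, deriv (deriv f) r * f r - deriv f r ^ 2 = -m ^ 2 :=
  deriv_deriv_mul_sub_sq_of_forall_eq hs h (fun _ => (hasDerivAt_const_mul m).add_const β)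
    (fun _ => hasDerivAt_const _ m) fun _ => by ring

end Verification

/-- Classification of zero-free solutions of `f''·f - (f')² = -ξ²`. -/
theorem stmt_2 (a b ξ : ℝ) (hab : a < b) (hξ : 0 < ξ) (f : ℝ → ℝ)
    (hf : ContDiffOn ℝ 2 f (Set.Ioo a b))
    (hne : ∀ r ∈ Set.Ioo a b, f r ≠ 0) :
    (∀ r ∈ Set.Ioo a b, deriv (deriv f) r * f r - (deriv f r) ^ 2 = -ξ ^ 2) ↔
    ∃ α β : ℝ, α ≠ 0 ∧
      ((∀ r ∈ Set.Ioo a b, f r = ξ / α * Real.sin (α * r + β)) ∨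
       (∀ r ∈ Set.Ioo a b, f r = ξ / α * Real.sinh (α * r + β)) ∨
       (∀ r ∈ Set.Ioo a b, f r = -(ξ / α) * Real.sinh (α * r + β)) ∨
       (∀ r ∈ Set.Ioo a b, f r = ξ * r + β) ∨
       (∀ r ∈ Set.Ioo a b, f r = -ξ * r + β)) := by
  have hs : IsOpen (Ioo a b) := isOpen_Ioo
  have hs' : IsPreconnected (Ioo a b) := isPreconnected_Ioo
  constructor
  · intro hode
    obtain ⟨hf₁, hf₂⟩ := hf.hasDerivAt_deriv_and_deriv_deriv hs
    obtain ⟨c, hc⟩ := exists_sq_eq_and_eq_mul_of_mul_sub_sq_eq hs hs' hf₁ hf₂ hne hode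
    have hr₀ : (a + b) / 2 ∈ Ioo a b := ⟨by linarith, by linarith⟩
    rcases lt_trichotomy c 0 with hc₀ | rfl | hc₀
    · obtain ⟨α, hα, rfl⟩ : ∃ α, 0 < α ∧ c = -α ^ 2 :=
        ⟨√(-c), sqrt_pos.2 (neg_pos.2 hc₀), by rw [sq_sqrt (by linarith), neg_neg]⟩
      obtain ⟨β, h⟩ := exists_eq_div_mul_sin hs hs' hα.ne' hξ.le hf₁ hf₂
        (fun r hr => (hc r hr).2) hr₀ (hc _ hr₀).1
      exact ⟨α, β, hα.ne', .inl h⟩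
    · obtain ⟨β, h | h⟩ := exists_eq_mul_add_of_sq_eq hs hs' hf₁ hf₂
        (fun r hr => by simpa using (hc r hr).2) hr₀ (by simpa using (hc _ hr₀).1)
      exacts [⟨1, β, one_ne_zero, .inr <| .inr <| .inr <| .inl h⟩,
        ⟨1, β, one_ne_zero, .inr <| .inr <| .inr <| .inr h⟩]
    · obtain ⟨α, hα, rfl⟩ : ∃ α, 0 < α ∧ c = α ^ 2 :=
        ⟨√c, sqrt_pos.2 hc₀, (sq_sqrt hc₀.le).symm⟩
      obtain ⟨β, h | h⟩ := exists_eq_div_mul_sinh hs hs' hα.ne' hξ hf₁ hf₂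
        (fun r hr => (hc r hr).2) hr₀ (hc _ hr₀).1
      exacts [⟨α, β, hα.ne', .inr <| .inl h⟩, ⟨α, β, hα.ne', .inr <| .inr <| .inl h⟩]
  · rintro ⟨α, β, hα, h | h | h | h | h⟩
    · simpa [div_mul_cancel₀ ξ hα] using deriv_deriv_mul_sub_sq_of_eq_mul_sin hs h
    · simpa [div_mul_cancel₀ ξ hα] using deriv_deriv_mul_sub_sq_of_eq_mul_sinh hs h
    · simpa [div_mul_cancel₀ ξ hα] using deriv_deriv_mul_sub_sq_of_eq_mul_sinh hs h
    · exact deriv_deriv_mul_sub_sq_of_eq_mul_add hs h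
    · simpa using deriv_deriv_mul_sub_sq_of_eq_mul_add hs h
end

section
/- The solutions without zeros of the ODE -f''·f + (f')² = h with constant h ≤ 0 on an interval are exactly: f(r) = (√(-h)/α)·cosh(αr+β) when h < 0, and f(r) = α·e^{βr} when h = 0, where α ≠ 0 and β ∈ ℝ. -/
/-!
Writing `u = f'/f`, the equation says `u' = -h/f²`. Hence `((f')² - h)/f²` is a first integral;
for `h = 0` already `u` is constant, so `f` is an exponential. For `h < 0` the first integral is a
positive constant `α²`, which turns the equation into `f'' = α² f`. Then `f' ∓ α f` are multiples
of `e^{∓αr}` whose product is `h`, and `f = (A e^{αr} - B e^{-αr})/(2α)` with `AB = h < 0` is a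
`cosh`.
-/

open Real Set

theorem IsOpen.eq_of_hasDerivAt_zero {𝕜 G : Type*} [RCLike 𝕜] [NormedAddCommGroup G]
    [NormedSpace 𝕜 G] {s : Set 𝕜} {g : 𝕜 → G} (hs : IsOpen s) (hs' : IsPreconnected s)
    (hg : ∀ r ∈ s, HasDerivAt g 0 r) {x y : 𝕜} (hx : x ∈ s) (hy : y ∈ s) : g x = g y :=
  hs.is_const_of_deriv_eq_zero hs' (fun r hr => (hg r hr).differentiableAt.differentiableWithinAt)
    (fun r hr => (hg r hr).deriv) hx hy

theorem IsOpen.eq_mul_exp_of_hasDerivAt {s : Set ℝ} {g : ℝ → ℝ} {c : ℝ} (hs : IsOpen s)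
    (hs' : IsPreconnected s) (hg : ∀ r ∈ s, HasDerivAt g (c * g r) r) {x y : ℝ} (hx : x ∈ s)
    (hy : y ∈ s) : g x = g y * exp (c * (x - y)) := by
  have hconst : ∀ r ∈ s, HasDerivAt (fun t => g t * exp (-(c * t))) 0 r := by
    intro r hr
    have he : HasDerivAt (fun t => exp (-(c * t))) (exp (-(c * r)) * -c) r := by
      simpa using ((hasDerivAt_id r).const_mul c).neg.exp
    exact ((hg r hr).fun_mul he).congr_deriv (by ring)
  calc g x = g x * exp (-(c * x)) * exp (c * x) := by rw [mul_assoc, ← exp_add]; simp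
    _ = g y * exp (c * (x - y)) := by
      rw [hs.eq_of_hasDerivAt_zero hs' hconst hx hy, mul_assoc, ← exp_add]; ring_nf

theorem ContDiffOn.hasDerivAt_deriv_of_isOpen {s : Set ℝ} {f : ℝ → ℝ} (hf : ContDiffOn ℝ 2 f s)
    (hs : IsOpen s) {r : ℝ} (hr : r ∈ s) :
    HasDerivAt f (deriv f r) r ∧ HasDerivAt (deriv f) (deriv (deriv f) r) r := by
  have hf' : ContDiffOn ℝ 1 (deriv f) s := hf.deriv_of_isOpen hs (by norm_num)
  exact ⟨((hf.differentiableOn (by norm_num)).differentiableAt (hs.mem_nhds hr)).hasDerivAt,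
    ((hf'.differentiableOn (by norm_num)).differentiableAt (hs.mem_nhds hr)).hasDerivAt⟩

section

variable {f g : ℝ → ℝ} {g' h r : ℝ}

theorem hasDerivAt_div_of_ode (hf : HasDerivAt f (g r) r) (hg : HasDerivAt g g' r) (hr : f r ≠ 0)
    (hode : -g' * f r + g r ^ 2 = h) : HasDerivAt (fun t => g t / f t) (-h / f r ^ 2) r :=
  (hg.fun_div hf hr).congr_deriv (by rw [← hode]; ring)

theorem hasDerivAt_sq_sub_div_sq_of_ode (hf : HasDerivAt f (g r) r) (hg : HasDerivAt g g' r)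
    (hr : f r ≠ 0) (hode : -g' * f r + g r ^ 2 = h) :
    HasDerivAt (fun t => (g t ^ 2 - h) / f t ^ 2) 0 r :=
  (((hg.fun_pow 2).sub_const h).fun_div (hf.fun_pow 2) (pow_ne_zero 2 hr)).congr_deriv
    (by rw [← hode]; field_simp; ring)

end

theorem sq_mul_exp_add_sq_mul_exp_neg {a b : ℝ} (ha : 0 < a) (hb : 0 < b) (x : ℝ) :
    a ^ 2 * exp x + b ^ 2 * exp (-x) = 2 * a * b * cosh (x + log (a / b)) := by
  rw [cosh_eq, exp_add, neg_add, exp_add, exp_neg (log _), exp_log (div_pos ha hb)]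
  field_simp

theorem exists_eq_cosh_of_mul_eq_neg_sq {α k A B : ℝ} (hα : α ≠ 0) (hk : 0 < k)
    (hAB : A * B = -k ^ 2) : ∃ α' β : ℝ, α' ≠ 0 ∧
      ∀ x, (A * exp (α * x) - B * exp (-(α * x))) / (2 * α) = k / α' * cosh (α' * x + β) := by
  wlog hA : 0 < A generalizing α A B
  · have hB : 0 < B := by nlinarith
    obtain ⟨α', β, hα', hcosh⟩ := this (neg_ne_zero.2 hα) (by rwa [mul_comm]) hB
    refine ⟨α', β, hα', fun x => ?_⟩
    rw [← hcosh x, neg_mul, neg_neg]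
    field_simp
    ring
  set a := √A
  set b := √(-B)
  have ha : 0 < a := sqrt_pos.2 hA
  have hb : 0 < b := sqrt_pos.2 (by nlinarith)
  have hab : a * b = k := by
    rw [← sqrt_mul hA.le, ← neg_mul_eq_mul_neg, hAB, neg_neg, sqrt_sq hk.le]
  refine ⟨α, log (a / b), hα, fun x => ?_⟩
  have hcosh := sq_mul_exp_add_sq_mul_exp_neg ha hb (α * x)
  rw [sq_sqrt hA.le, sq_sqrt (by nlinarith), mul_assoc 2, hab] at hcosh
  field_simp
  linear_combination hcosh

theorem exists_eq_exp_sub_exp_of_hasDerivAt {s : Set ℝ} {f f' : ℝ → ℝ} {α r₀ : ℝ}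
    (hs : IsOpen s) (hs' : IsPreconnected s) (hf : ∀ r ∈ s, HasDerivAt f (f' r) r)
    (hf' : ∀ r ∈ s, HasDerivAt f' (α ^ 2 * f r) r) (hr₀ : r₀ ∈ s) :
    ∃ A B : ℝ, A * B = f' r₀ ^ 2 - α ^ 2 * f r₀ ^ 2 ∧
      ∀ r ∈ s, 2 * α * f r = A * exp (α * r) - B * exp (-(α * r)) := by
  set p := fun r => f' r - α * f r
  set q := fun r => f' r + α * f r
  have hp : ∀ r ∈ s, HasDerivAt p (-α * p r) r := fun r hr =>
    ((hf' r hr).sub ((hf r hr).const_mul α)).congr_deriv (by ring)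
  have hq : ∀ r ∈ s, HasDerivAt q (α * q r) r := fun r hr =>
    ((hf' r hr).add ((hf r hr).const_mul α)).congr_deriv (by ring)
  refine ⟨q r₀ * exp (-(α * r₀)), p r₀ * exp (α * r₀), ?_, fun r hr => ?_⟩
  · rw [mul_mul_mul_comm, ← exp_add, neg_add_cancel, exp_zero]
    ring
  · have hpr := hs.eq_mul_exp_of_hasDerivAt hs' hp hr hr₀
    have hqr := hs.eq_mul_exp_of_hasDerivAt hs' hq hr hr₀
    have hpe : exp (-α * (r - r₀)) = exp (α * r₀) * exp (-(α * r)) := by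
      rw [← exp_add]; ring_nf
    have hqe : exp (α * (r - r₀)) = exp (-(α * r₀)) * exp (α * r) := by
      rw [← exp_add]; ring_nf
    rw [hpe] at hpr
    rw [hqe] at hqr
    linear_combination hqr - hpr

noncomputable def odeLHS (f : ℝ → ℝ) (r : ℝ) : ℝ := -(deriv (deriv f) r) * f r + deriv f r ^ 2

theorem Set.EqOn.odeLHS_eq {s : Set ℝ} {f g : ℝ → ℝ} {r : ℝ} (hfg : EqOn f g s) (hs : IsOpen s)
    (hr : r ∈ s) : odeLHS f r = odeLHS g r := by
  rw [odeLHS, odeLHS, hfg hr, hfg.deriv hs hr, (hfg.deriv hs).deriv hs hr]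

theorem exists_eq_mul_exp_of_ode_zero {s : Set ℝ} {f : ℝ → ℝ} (hs : IsOpen s)
    (hs' : IsPreconnected s) (hf : ContDiffOn ℝ 2 f s) (hne : ∀ r ∈ s, f r ≠ 0)
    (hode : ∀ r ∈ s, odeLHS f r = 0) :
    ∃ α β : ℝ, α ≠ 0 ∧ ∀ r ∈ s, f r = α * exp (β * r) := by
  rcases s.eq_empty_or_nonempty with rfl | ⟨r₀, hr₀⟩
  · exact ⟨1, 0, one_ne_zero, by simp⟩
  have hd r (hr : r ∈ s) := hf.hasDerivAt_deriv_of_isOpen hs hr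
  set β := deriv f r₀ / f r₀
  have hu : ∀ t ∈ s, HasDerivAt (fun t => deriv f t / f t) 0 t := fun t ht => by
    simpa using hasDerivAt_div_of_ode (hd t ht).1 (hd t ht).2 (hne t ht) (hode t ht)
  have hlog : ∀ r ∈ s, HasDerivAt f (β * f r) r := by
    intro r hr
    have hβ : deriv f r = β * f r :=
      (div_eq_iff (hne r hr)).1 (hs.eq_of_hasDerivAt_zero hs' hu hr hr₀)
    exact hβ ▸ (hd r hr).1
  refine ⟨f r₀ * exp (-(β * r₀)), β, mul_ne_zero (hne r₀ hr₀) (exp_ne_zero _), fun r hr => ?_⟩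
  rw [hs.eq_mul_exp_of_hasDerivAt hs' hlog hr hr₀, mul_assoc, ← exp_add]
  ring_nf

theorem exists_eq_cosh_of_ode_neg {s : Set ℝ} {f : ℝ → ℝ} {h : ℝ} (hs : IsOpen s)
    (hs' : IsPreconnected s) (hf : ContDiffOn ℝ 2 f s) (hne : ∀ r ∈ s, f r ≠ 0) (hh : h < 0)
    (hode : ∀ r ∈ s, odeLHS f r = h) :
    ∃ α β : ℝ, α ≠ 0 ∧ ∀ r ∈ s, f r = √(-h) / α * cosh (α * r + β) := by
  rcases s.eq_empty_or_nonempty with rfl | ⟨r₀, hr₀⟩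
  · exact ⟨1, 0, one_ne_zero, by simp⟩
  have hd r (hr : r ∈ s) := hf.hasDerivAt_deriv_of_isOpen hs hr
  set C := (deriv f r₀ ^ 2 - h) / f r₀ ^ 2
  have hC : 0 < C :=
    div_pos (by nlinarith [sq_nonneg (deriv f r₀)]) (sq_pos_of_ne_zero (hne r₀ hr₀))
  have hfirst : ∀ r ∈ s, deriv f r ^ 2 - h = C * f r ^ 2 := by
    intro r hr
    have hW : (deriv f r ^ 2 - h) / f r ^ 2 = C :=
      hs.eq_of_hasDerivAt_zero hs' (fun t ht => hasDerivAt_sq_sub_div_sq_of_ode (hd t ht).1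
        (hd t ht).2 (hne t ht) (hode t ht)) hr hr₀
    rw [← hW]
    field_simp [hne r hr]
  have hα : √C ≠ 0 := (sqrt_pos.2 hC).ne'
  have hf'' : ∀ r ∈ s, HasDerivAt (deriv f) (√C ^ 2 * f r) r := by
    intro r hr
    refine (hd r hr).2.congr_deriv (mul_right_cancel₀ (hne r hr) ?_)
    have hode_r : -(deriv (deriv f) r) * f r + deriv f r ^ 2 = h := hode r hr
    rw [sq_sqrt hC.le]
    linear_combination hfirst r hr - hode_r
  obtain ⟨A, B, hAB, hfAB⟩ :=
    exists_eq_exp_sub_exp_of_hasDerivAt hs hs' (fun r hr => (hd r hr).1) hf'' hr₀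
  have hAB' : A * B = -√(-h) ^ 2 := by
    rw [hAB, sq_sqrt hC.le, sq_sqrt (neg_nonneg.2 hh.le)]
    linear_combination hfirst r₀ hr₀
  obtain ⟨α, β, hα, hcosh⟩ :=
    exists_eq_cosh_of_mul_eq_neg_sq hα (sqrt_pos.2 (neg_pos.2 hh)) hAB'
  exact ⟨α, β, hα, fun r hr => by rw [← hcosh, ← hfAB r hr]; field_simp⟩

theorem odeLHS_div_mul_cosh {k α : ℝ} (β : ℝ) (hα : α ≠ 0) (r : ℝ) :
    odeLHS (fun x => k / α * cosh (α * x + β)) r = -k ^ 2 := by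
  have hlin x : HasDerivAt (fun x => α * x + β) α x :=
    (((hasDerivAt_id x).const_mul α).add_const β).congr_deriv (mul_one α)
  have hd : deriv (fun x => k / α * cosh (α * x + β)) = fun x => k * sinh (α * x + β) :=
    funext fun x => (((hlin x).cosh).const_mul (k / α)).deriv.trans (by field_simp)
  have hdd : deriv (fun x => k * sinh (α * x + β)) r = k * α * cosh (α * r + β) :=
    (((hlin r).sinh).const_mul k).deriv.trans (by ring)
  rw [odeLHS, hd, hdd]
  field_simp
  linear_combination (-k ^ 2) * cosh_sq_sub_sinh_sq (α * r + β)

theorem odeLHS_mul_exp (α β r : ℝ) : odeLHS (fun x => α * exp (β * x)) r = 0 := by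
  have hd x : HasDerivAt (fun x => exp (β * x)) (β * exp (β * x)) x :=
    (((hasDerivAt_id x).const_mul β).exp).congr_deriv (by simp [mul_comm])
  have h1 : deriv (fun x => α * exp (β * x)) = fun x => α * β * exp (β * x) :=
    funext fun x => ((hd x).const_mul α).deriv.trans (by ring)
  rw [odeLHS, h1, ((hd r).const_mul (α * β)).deriv]
  ring

theorem stmt_4_general (a b h : ℝ) (hh : h ≤ 0) (f : ℝ → ℝ)
    (hf : ContDiffOn ℝ 2 f (Set.Ioo a b))
    (hne : ∀ r ∈ Set.Ioo a b, f r ≠ 0) :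
    (∀ r ∈ Set.Ioo a b, -(deriv (deriv f) r) * f r + (deriv f r) ^ 2 = h) ↔
    ((h < 0 ∧ ∃ α β : ℝ, α ≠ 0 ∧
        ∀ r ∈ Set.Ioo a b, f r = Real.sqrt (-h) / α * Real.cosh (α * r + β)) ∨
     (h = 0 ∧ ∃ α β : ℝ, α ≠ 0 ∧
        ∀ r ∈ Set.Ioo a b, f r = α * Real.exp (β * r))) := by
  constructor
  · intro hode
    rcases hh.lt_or_eq with hh | rfl
    · exact Or.inl ⟨hh, exists_eq_cosh_of_ode_neg isOpen_Ioo isPreconnected_Ioo hf hne hh hode⟩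
    · exact Or.inr ⟨rfl, exists_eq_mul_exp_of_ode_zero isOpen_Ioo isPreconnected_Ioo hf hne hode⟩
  · rintro (⟨hh, α, β, hα, hfg⟩ | ⟨rfl, α, β, -, hfg⟩) r hr
    · calc odeLHS f r = -√(-h) ^ 2 :=
          (EqOn.odeLHS_eq hfg isOpen_Ioo hr).trans (odeLHS_div_mul_cosh β hα r)
        _ = h := by rw [sq_sqrt (neg_nonneg.2 hh.le), neg_neg]
    · exact (EqOn.odeLHS_eq hfg isOpen_Ioo hr).trans (odeLHS_mul_exp α β r)

/-- Classification of zero-free solutions of `-f''·f + (f')² = h` with constant `h ≤ 0`. -/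
theorem stmt_4 (a b h : ℝ) (hab : a < b) (hh : h ≤ 0) (f : ℝ → ℝ)
    (hf : ContDiffOn ℝ 2 f (Set.Ioo a b))
    (hne : ∀ r ∈ Set.Ioo a b, f r ≠ 0) :
    (∀ r ∈ Set.Ioo a b, -(deriv (deriv f) r) * f r + (deriv f r) ^ 2 = h) ↔
    ((h < 0 ∧ ∃ α β : ℝ, α ≠ 0 ∧
        ∀ r ∈ Set.Ioo a b, f r = Real.sqrt (-h) / α * Real.cosh (α * r + β)) ∨
     (h = 0 ∧ ∃ α β : ℝ, α ≠ 0 ∧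
        ∀ r ∈ Set.Ioo a b, f r = α * Real.exp (β * r))) :=
  stmt_4_general a b h hh f hf hne
end

section
/- If Ψ is a C² function without zeros on an interval I satisfying 3Ψ''·Ψ = 4(Ψ')² on I, then there exist constants A ≠ 0 and ζ ∉ I such that either Ψ(z) = A (constant, corresponding to i = 1, Ψ(z) = A·(z-ζ)⁰) or Ψ(z) = A·(z-ζ)^{-3} on I. -/
/-!
On an interval a zero-free continuous `Ψ` has constant sign, and replacing `Ψ` by `-Ψ` preserves
the equation, so we may take `Ψ > 0` (`Real.rpow` is not the real cube root at negative bases).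
Then `u = Ψ ^ (-1/3)` has `u'' = -(1/9) Ψ ^ (-7/3) (3 Ψ'' Ψ - 4 Ψ'²) = 0`, so `u` is affine,
`u = c z + d > 0`, and `Ψ = u⁻³` is `d⁻³` if `c = 0` and `c⁻³ / (z + d / c)³` otherwise, the pole
`-d / c` being the zero of `u`, which lies outside the interval.
-/

open Set

theorem IsPreconnected.forall_pos_or_forall_neg {X : Type*} [TopologicalSpace X] {s : Set X}
    (hs : IsPreconnected s) {f : X → ℝ} (hf : ContinuousOn f s) (hne : ∀ x ∈ s, f x ≠ 0) :
    (∀ x ∈ s, 0 < f x) ∨ (∀ x ∈ s, f x < 0) := by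
  by_contra! ⟨⟨x, hx, hfx⟩, ⟨y, hy, hfy⟩⟩
  obtain ⟨z, hz, hfz⟩ := hs.intermediate_value hx hy hf ⟨hfx, hfy⟩
  exact hne z hz hfz

theorem IsOpen.exists_affine_of_hasDerivAt_hasDerivAt_zero {s : Set ℝ} (hs : IsOpen s)
    (hs' : IsPreconnected s) {u u' : ℝ → ℝ} (hu : ∀ z ∈ s, HasDerivAt u (u' z) z)
    (hu' : ∀ z ∈ s, HasDerivAt u' 0 z) : ∃ c d : ℝ, ∀ z ∈ s, u z = c * z + d := by
  obtain ⟨c, hc⟩ := hs.exists_is_const_of_deriv_eq_zero hs'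
    (fun z hz ↦ (hu' z hz).differentiableAt.differentiableWithinAt) fun z hz ↦ (hu' z hz).deriv
  obtain ⟨d, hd⟩ := hs.exists_eq_add_of_deriv_eq hs'
    (fun z hz ↦ (hu z hz).differentiableAt.differentiableWithinAt)
    (differentiable_id.const_mul c).differentiableOn fun z hz ↦ by
      simp [(hu z hz).deriv, hc z hz]
  exact ⟨c, d, hd⟩

theorem HasDerivAt.hasDerivAt_mul_rpow_neg_four_thirds {Ψ Ψ' : ℝ → ℝ} {Ψ'' z : ℝ}
    (hΨ : HasDerivAt Ψ (Ψ' z) z) (hΨ' : HasDerivAt Ψ' Ψ'' z) (hz : Ψ z ≠ 0) :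
    HasDerivAt (fun x ↦ Ψ' x * Ψ x ^ (-(4 / 3) : ℝ))
      ((3 * Ψ'' * Ψ z - 4 * Ψ' z ^ 2) / 3 * Ψ z ^ (-(7 / 3) : ℝ)) z := by
  refine (hΨ'.mul (hΨ.rpow_const (p := -(4 / 3)) (.inl hz))).congr_deriv ?_
  have : Ψ z ^ (-(4 / 3) : ℝ) = Ψ z ^ (-(7 / 3) : ℝ) * Ψ z := by
    rw [← Real.rpow_add_one hz]; norm_num
  rw [this]; norm_num; ring

theorem IsOpen.exists_rpow_neg_one_third_eq_affine {s : Set ℝ} (hs : IsOpen s)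
    (hs' : IsPreconnected s) {Ψ Ψ' Ψ'' : ℝ → ℝ} (hΨ : ∀ z ∈ s, HasDerivAt Ψ (Ψ' z) z)
    (hΨ' : ∀ z ∈ s, HasDerivAt Ψ' (Ψ'' z) z) (hne : ∀ z ∈ s, Ψ z ≠ 0)
    (hode : ∀ z ∈ s, 3 * Ψ'' z * Ψ z = 4 * Ψ' z ^ 2) :
    ∃ c d : ℝ, ∀ z ∈ s, Ψ z ^ (-(1 / 3) : ℝ) = c * z + d := by
  refine hs.exists_affine_of_hasDerivAt_hasDerivAt_zero hs'
    (u' := fun x ↦ -(1 / 3) * (Ψ' x * Ψ x ^ (-(4 / 3) : ℝ))) (fun z hz ↦ ?_) fun z hz ↦ ?_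
  · refine ((hΨ z hz).rpow_const (.inl (hne z hz))).congr_deriv ?_
    norm_num; ring
  · refine (((hΨ z hz).hasDerivAt_mul_rpow_neg_four_thirds (hΨ' z hz) (hne z hz)).const_mul
      (-(1 / 3))).congr_deriv ?_
    rw [hode z hz, sub_self, zero_div, zero_mul, mul_zero]

theorem exists_eq_const_or_eq_div_cube_of_eq_inv_affine_cube {a b : ℝ} (hab : a < b)
    {Ψ : ℝ → ℝ} {c d : ℝ} (hpos : ∀ z ∈ Ioo a b, 0 < c * z + d)
    (hΨ : ∀ z ∈ Ioo a b, Ψ z = ((c * z + d) ^ 3)⁻¹) :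
    ∃ A ζ : ℝ, A ≠ 0 ∧ ζ ∉ Ioo a b ∧
      ((∀ z ∈ Ioo a b, Ψ z = A) ∨ (∀ z ∈ Ioo a b, Ψ z = A / (z - ζ) ^ 3)) := by
  rcases eq_or_ne c 0 with rfl | hc
  · obtain ⟨z₀, hz₀⟩ := nonempty_Ioo.2 hab
    have hd : 0 < d := by simpa using hpos z₀ hz₀
    exact ⟨(d ^ 3)⁻¹, a, by positivity, fun h ↦ h.1.false, .inl fun z hz ↦ by
      simpa using hΨ z hz⟩
  · refine ⟨(c ^ 3)⁻¹, -d / c, by positivity, fun hζ ↦ ?_, .inr fun z hz ↦ ?_⟩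
    · have := hpos _ hζ
      rw [mul_div_cancel₀ _ hc] at this
      linarith
    · rw [hΨ z hz, show c * z + d = c * (z - -d / c) by field_simp; ring,
        mul_pow, mul_inv, ← div_eq_mul_inv]

theorem exists_eq_const_or_eq_div_cube_of_pos {a b : ℝ} (hab : a < b) {Ψ Ψ' Ψ'' : ℝ → ℝ}
    (hΨ : ∀ z ∈ Ioo a b, HasDerivAt Ψ (Ψ' z) z) (hΨ' : ∀ z ∈ Ioo a b, HasDerivAt Ψ' (Ψ'' z) z)
    (hpos : ∀ z ∈ Ioo a b, 0 < Ψ z) (hode : ∀ z ∈ Ioo a b, 3 * Ψ'' z * Ψ z = 4 * Ψ' z ^ 2) :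
    ∃ A ζ : ℝ, A ≠ 0 ∧ ζ ∉ Ioo a b ∧
      ((∀ z ∈ Ioo a b, Ψ z = A) ∨ (∀ z ∈ Ioo a b, Ψ z = A / (z - ζ) ^ 3)) := by
  obtain ⟨c, d, hcd⟩ := isOpen_Ioo.exists_rpow_neg_one_third_eq_affine isPreconnected_Ioo hΨ hΨ'
    (fun z hz ↦ (hpos z hz).ne') hode
  refine exists_eq_const_or_eq_div_cube_of_eq_inv_affine_cube hab (c := c) (d := d)
    (fun z hz ↦ ?_) fun z hz ↦ ?_
  · exact hcd z hz ▸ Real.rpow_pos_of_pos (hpos z hz) _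
  · rw [← hcd z hz, ← Real.rpow_natCast, ← Real.rpow_mul (hpos z hz).le, ← Real.rpow_neg
      (hpos z hz).le]
    norm_num

/-- Zero-free solutions of `3Ψ''Ψ = 4(Ψ')²` are `A` or `A·(z-ζ)⁻³`. -/
theorem stmt_5 (a b : ℝ) (hab : a < b) (Ψ : ℝ → ℝ)
    (hΨ : ContDiffOn ℝ 2 Ψ (Set.Ioo a b))
    (hne : ∀ z ∈ Set.Ioo a b, Ψ z ≠ 0)
    (hode : ∀ z ∈ Set.Ioo a b, 3 * deriv (deriv Ψ) z * Ψ z = 4 * (deriv Ψ z) ^ 2) :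
    ∃ A ζ : ℝ, A ≠ 0 ∧ ζ ∉ Set.Ioo a b ∧
      ((∀ z ∈ Set.Ioo a b, Ψ z = A) ∨
       (∀ z ∈ Set.Ioo a b, Ψ z = A / (z - ζ) ^ 3)) := by
  have hd1 : ∀ z ∈ Ioo a b, HasDerivAt Ψ (deriv Ψ z) z := fun z hz ↦
    ((hΨ.differentiableOn two_ne_zero z hz).differentiableAt (isOpen_Ioo.mem_nhds hz)).hasDerivAt
  have hd2 : ∀ z ∈ Ioo a b, HasDerivAt (deriv Ψ) (deriv (deriv Ψ) z) z := fun z hz ↦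
    (((hΨ.deriv_of_isOpen isOpen_Ioo one_add_one_eq_two.le).differentiableOn one_ne_zero z
      hz).differentiableAt (isOpen_Ioo.mem_nhds hz)).hasDerivAt
  rcases isPreconnected_Ioo.forall_pos_or_forall_neg hΨ.continuousOn hne with hpos | hneg
  · exact exists_eq_const_or_eq_div_cube_of_pos hab hd1 hd2 hpos hode
  · obtain ⟨A, ζ, hA, hζ, h⟩ := exists_eq_const_or_eq_div_cube_of_pos hab (Ψ := fun z ↦ -Ψ z)
      (fun z hz ↦ (hd1 z hz).neg) (fun z hz ↦ (hd2 z hz).neg) (fun z hz ↦ neg_pos.2 (hneg z hz))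
      fun z hz ↦ by linear_combination hode z hz
    refine ⟨-A, ζ, neg_ne_zero.2 hA, hζ, h.imp (fun h z hz ↦ ?_) fun h z hz ↦ ?_⟩
    · linear_combination -h z hz
    · linear_combination -h z hz
end

section
/- For the Bertrand surface of the second type, i.e. metric in coordinates (θ, φ) given by ds² = dθ²/Q(θ)² + dφ²/(μ²Q(θ)) with Q(θ) = θ² + c − dθ^{-2}, the scalar curvature satisfies R(θ)/2 = c − 6d/θ² − 3cd/θ⁴ + 2d²/θ⁶, and R'(θ)/24 = (d/θ⁵)·Q(θ). In particular R is constant when d = 0, increasing in θ when d < 0 (on intervals where Q > 0, θ < 0), and decreasing when d > 0. -/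
/-!
Along the profile, `θ' = Q(θ)` and `f = (μ √Q(θ))⁻¹`, so the chain rule gives
`f' = -Q'(θ) f / 2` and `f'' = (Q'(θ)² / 4 - Q(θ) Q''(θ) / 2) f`. Hence the curvature
`R = -2 f'' / f = Q Q'' - Q'² / 2` is a rational function of `θ` alone, and for
`Q(θ) = θ² + c - d θ⁻²` a direct computation gives the stated formula and
`R'(θ) = 24 d θ⁻⁵ Q(θ)`, whose sign on `θ < 0, Q > 0` is the opposite of the sign of `d`.
-/

open Set Filter

section ProfileCurvature

variable {Q Q' θ : ℝ → ℝ} {μ : ℝ}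

lemma hasDerivAt_inv_mul_sqrt_comp {r : ℝ} (hQ : HasDerivAt Q (Q' (θ r)) (θ r))
    (hθ : HasDerivAt θ (Q (θ r)) r) (hpos : 0 < Q (θ r)) (hμ : μ ≠ 0) :
    HasDerivAt (fun s => 1 / (μ * √(Q (θ s))))
      (-(1 / 2) * Q' (θ r) * (1 / (μ * √(Q (θ r))))) r := by
  have hsqrt : √(Q (θ r)) ≠ 0 := (Real.sqrt_pos.mpr hpos).ne'
  have hden := (((Real.hasDerivAt_sqrt hpos.ne').comp r (hQ.comp r hθ))).const_mul μ
  refine ((hasDerivAt_const r (1 : ℝ)).fun_div hden (mul_ne_zero hμ hsqrt)).congr_deriv ?_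
  have hsq : √(Q (θ r)) ^ 2 = Q (θ r) := Real.sq_sqrt hpos.le
  simp only [Function.comp_apply]
  field_simp
  rw [hsq]
  ring

/-- The scalar curvature `-2 f'' / f` of the surface of revolution with profile `f = (μ √Q(θ))⁻¹`
in the arclength parameter `r`, where `dθ/dr = Q(θ)`. -/
lemma neg_two_mul_deriv_deriv_div_eq {Q'' f : ℝ → ℝ} {U : Set ℝ} {r : ℝ}
    (hU : IsOpen U) (hr : r ∈ U)
    (hQ : ∀ s ∈ U, HasDerivAt Q (Q' (θ s)) (θ s)) (hQ' : HasDerivAt Q' (Q'' (θ r)) (θ r))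
    (hθ : ∀ s ∈ U, HasDerivAt θ (Q (θ s)) s) (hpos : ∀ s ∈ U, 0 < Q (θ s)) (hμ : μ ≠ 0)
    (hf : ∀ s ∈ U, f s = 1 / (μ * √(Q (θ s)))) :
    -2 * deriv (deriv f) r / f r = Q (θ r) * Q'' (θ r) - Q' (θ r) ^ 2 / 2 := by
  have hf' : ∀ s ∈ U, HasDerivAt f (-(1 / 2) * Q' (θ s) * f s) s := fun s hs => by
    rw [hf s hs]
    exact (hasDerivAt_inv_mul_sqrt_comp (hQ s hs) (hθ s hs) (hpos s hs) hμ).congr_of_eventuallyEq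
      (eventually_of_mem (hU.mem_nhds hs) hf)
  have hderiv_f : deriv f =ᶠ[nhds r] fun s => -(1 / 2) * Q' (θ s) * f s :=
    eventually_of_mem (hU.mem_nhds hr) fun s hs => (hf' s hs).deriv
  have hf'' : deriv (deriv f) r
      = -(1 / 2) * (Q'' (θ r) * Q (θ r)) * f r + -(1 / 2) * Q' (θ r) * (-(1 / 2) * Q' (θ r) * f r) := by
    rw [hderiv_f.deriv_eq]
    exact (((hQ'.comp r (hθ r hr)).const_mul (-(1 / 2))).fun_mul (hf' r hr)).deriv
  have hf0 : f r ≠ 0 := by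
    rw [hf r hr]
    exact one_div_ne_zero (mul_ne_zero hμ (Real.sqrt_pos.mpr (hpos r hr)).ne')
  rw [hf'']
  field_simp
  ring

end ProfileCurvature

lemma hasDerivAt_const_div_pow (a : ℝ) (n : ℕ) {x : ℝ} (hx : x ≠ 0) :
    HasDerivAt (fun y => a / y ^ n) (-(n * a) / x ^ (n + 1)) x := by
  refine ((hasDerivAt_const x a).fun_div (hasDerivAt_pow n x) (pow_ne_zero n hx)).congr_deriv ?_
  rcases n with _ | n
  · simp
  · rw [Nat.add_sub_cancel]
    field_simp
    ring

noncomputable def bertrandQ (c d x : ℝ) : ℝ := x ^ 2 + c - d / x ^ 2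

noncomputable def bertrandCurvature (c d x : ℝ) : ℝ :=
  2 * (c - 6 * d / x ^ 2 - 3 * c * d / x ^ 4 + 2 * d ^ 2 / x ^ 6)

section Bertrand

variable (c d : ℝ) {x : ℝ}

lemma hasDerivAt_bertrandQ (hx : x ≠ 0) :
    HasDerivAt (bertrandQ c d) (2 * x + 2 * d / x ^ 3) x := by
  refine (((hasDerivAt_pow 2 x).add_const c).fun_sub (hasDerivAt_const_div_pow d 2 hx)).congr_deriv ?_
  push_cast
  ring

lemma hasDerivAt_two_mul_add_div_pow_three (hx : x ≠ 0) :
    HasDerivAt (fun y => 2 * y + 2 * d / y ^ 3) (2 - 6 * d / x ^ 4) x := by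
  refine (((hasDerivAt_id x).const_mul 2).fun_add
    (hasDerivAt_const_div_pow (2 * d) 3 hx)).congr_deriv ?_
  push_cast
  ring

lemma bertrandQ_mul_sub_sq (hx : x ≠ 0) :
    bertrandQ c d x * (2 - 6 * d / x ^ 4) - (2 * x + 2 * d / x ^ 3) ^ 2 / 2
      = bertrandCurvature c d x := by
  unfold bertrandQ bertrandCurvature
  field_simp
  ring

lemma hasDerivAt_bertrandCurvature (hx : x ≠ 0) :
    HasDerivAt (bertrandCurvature c d) (24 * (d / x ^ 5) * bertrandQ c d x) x := by
  refine (((((hasDerivAt_const x c).fun_sub (hasDerivAt_const_div_pow (6 * d) 2 hx)).fun_sub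
    (hasDerivAt_const_div_pow (3 * c * d) 4 hx)).fun_add
    (hasDerivAt_const_div_pow (2 * d ^ 2) 6 hx)).const_mul 2).congr_deriv ?_
  unfold bertrandQ
  push_cast
  field_simp
  ring

lemma bertrandCurvature_zero_right : bertrandCurvature c 0 x = 2 * c := by
  simp [bertrandCurvature]

end Bertrand

theorem stmt_17_general (c d μ a b : ℝ) (hμ : 0 < μ)
    (θ f : ℝ → ℝ)
    (hneg : ∀ r ∈ Set.Ioo a b, θ r < 0)
    (hQpos : ∀ r ∈ Set.Ioo a b, 0 < (θ r) ^ 2 + c - d / (θ r) ^ 2)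
    (hθ' : ∀ r ∈ Set.Ioo a b, deriv θ r = (θ r) ^ 2 + c - d / (θ r) ^ 2)
    (hfdef : ∀ r ∈ Set.Ioo a b,
      f r = 1 / (μ * Real.sqrt ((θ r) ^ 2 + c - d / (θ r) ^ 2))) :
    (∀ r ∈ Set.Ioo a b,
      -2 * deriv (deriv f) r / f r
        = 2 * (c - 6 * d / (θ r) ^ 2 - 3 * c * d / (θ r) ^ 4 + 2 * d ^ 2 / (θ r) ^ 6)) ∧
    (∀ t : ℝ, t < 0 →
      deriv (fun s => 2 * (c - 6 * d / s ^ 2 - 3 * c * d / s ^ 4 + 2 * d ^ 2 / s ^ 6)) t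
        = 24 * (d / t ^ 5) * (t ^ 2 + c - d / t ^ 2)) ∧
    (d = 0 → ∀ t₁ t₂ : ℝ, t₁ < 0 → t₂ < 0 →
      2 * (c - 6 * d / t₁ ^ 2 - 3 * c * d / t₁ ^ 4 + 2 * d ^ 2 / t₁ ^ 6)
        = 2 * (c - 6 * d / t₂ ^ 2 - 3 * c * d / t₂ ^ 4 + 2 * d ^ 2 / t₂ ^ 6)) ∧
    (d < 0 → ∀ t : ℝ, t < 0 → 0 < t ^ 2 + c - d / t ^ 2 →
      0 < deriv (fun s => 2 * (c - 6 * d / s ^ 2 - 3 * c * d / s ^ 4 + 2 * d ^ 2 / s ^ 6)) t) ∧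
    (0 < d → ∀ t : ℝ, t < 0 → 0 < t ^ 2 + c - d / t ^ 2 →
      deriv (fun s => 2 * (c - 6 * d / s ^ 2 - 3 * c * d / s ^ 4 + 2 * d ^ 2 / s ^ 6)) t < 0) := by
  -- `deriv θ r = Q(θ r) ≠ 0`, and `deriv` takes the junk value `0` where `θ` is not differentiable.
  have hθ : ∀ r ∈ Ioo a b, HasDerivAt θ (bertrandQ c d (θ r)) r := fun r hr => by
    rw [bertrandQ, ← hθ' r hr]
    exact (differentiableAt_of_deriv_ne_zero ((hθ' r hr).trans_ne (hQpos r hr).ne')).hasDerivAt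
  have hR' : ∀ t : ℝ, t < 0 →
      deriv (bertrandCurvature c d) t = 24 * (d / t ^ 5) * bertrandQ c d t := fun t ht =>
    (hasDerivAt_bertrandCurvature c d ht.ne).deriv
  have ht5 : ∀ t : ℝ, t < 0 → t ^ 5 < 0 := fun t ht => Odd.pow_neg (by decide) ht
  refine ⟨fun r hr => ?_, hR', fun hd t₁ t₂ _ _ => ?_, fun hd t ht hQ => ?_, fun hd t ht hQ => ?_⟩
  · rw [neg_two_mul_deriv_deriv_div_eq (Q := bertrandQ c d) (Q' := fun y => 2 * y + 2 * d / y ^ 3)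
      (Q'' := fun y => 2 - 6 * d / y ^ 4) isOpen_Ioo hr
      (fun s hs => hasDerivAt_bertrandQ c d (hneg s hs).ne)
      (hasDerivAt_two_mul_add_div_pow_three d (hneg r hr).ne) hθ hQpos hμ.ne' hfdef]
    exact bertrandQ_mul_sub_sq c d (hneg r hr).ne
  · subst hd
    exact (bertrandCurvature_zero_right c).trans (bertrandCurvature_zero_right c).symm
  · change 0 < deriv (bertrandCurvature c d) t
    rw [hR' t ht]
    exact mul_pos (mul_pos (by norm_num) (div_pos_of_neg_of_neg hd (ht5 t ht))) hQ
  · change deriv (bertrandCurvature c d) t < 0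
    rw [hR' t ht]
    exact mul_neg_of_neg_of_pos (mul_neg_of_pos_of_neg (by norm_num) (div_neg_of_pos_of_neg hd (ht5 t ht))) hQ

/-- Scalar curvature of Bertrand surfaces of the second type:
explicit formula, its derivative, and monotonicity in `θ`. -/
theorem stmt_17 (c d μ a b : ℝ) (hμ : 0 < μ) (hab : a < b)
    (θ f : ℝ → ℝ)
    (hθdiff : ContDiffOn ℝ 2 θ (Set.Ioo a b))
    (hneg : ∀ r ∈ Set.Ioo a b, θ r < 0)
    (hQpos : ∀ r ∈ Set.Ioo a b, 0 < (θ r) ^ 2 + c - d / (θ r) ^ 2)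
    (hθ' : ∀ r ∈ Set.Ioo a b, deriv θ r = (θ r) ^ 2 + c - d / (θ r) ^ 2)
    (hfdef : ∀ r ∈ Set.Ioo a b,
      f r = 1 / (μ * Real.sqrt ((θ r) ^ 2 + c - d / (θ r) ^ 2))) :
    (∀ r ∈ Set.Ioo a b,
      -2 * deriv (deriv f) r / f r
        = 2 * (c - 6 * d / (θ r) ^ 2 - 3 * c * d / (θ r) ^ 4 + 2 * d ^ 2 / (θ r) ^ 6)) ∧
    (∀ t : ℝ, t < 0 →
      deriv (fun s => 2 * (c - 6 * d / s ^ 2 - 3 * c * d / s ^ 4 + 2 * d ^ 2 / s ^ 6)) t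
        = 24 * (d / t ^ 5) * (t ^ 2 + c - d / t ^ 2)) ∧
    (d = 0 → ∀ t₁ t₂ : ℝ, t₁ < 0 → t₂ < 0 →
      2 * (c - 6 * d / t₁ ^ 2 - 3 * c * d / t₁ ^ 4 + 2 * d ^ 2 / t₁ ^ 6)
        = 2 * (c - 6 * d / t₂ ^ 2 - 3 * c * d / t₂ ^ 4 + 2 * d ^ 2 / t₂ ^ 6)) ∧
    (d < 0 → ∀ t : ℝ, t < 0 → 0 < t ^ 2 + c - d / t ^ 2 →
      0 < deriv (fun s => 2 * (c - 6 * d / s ^ 2 - 3 * c * d / s ^ 4 + 2 * d ^ 2 / s ^ 6)) t) ∧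
    (0 < d → ∀ t : ℝ, t < 0 → 0 < t ^ 2 + c - d / t ^ 2 →
      deriv (fun s => 2 * (c - 6 * d / s ^ 2 - 3 * c * d / s ^ 4 + 2 * d ^ 2 / s ^ 6)) t < 0) :=
  stmt_17_general c d μ a b hμ θ f hneg hQpos hθ' hfdef
end
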